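/- arXiv:1108.4439 — 2 statements merged into one kernel-verified Lean document; each statement's English description precedes it below -/
import Mathlib

section
/- Let C be a finite set with |C| ≥ 2 and let N : C × C → ℤ be antisymmetric (N(a,b) = −N(b,a) for all a,b, so N(a,a) = 0) with every value N(a,b) even. Then there exists a profile P of votes on C whose net advantage function equals N, i.e., netadv_P(a,b) = N(a,b) for all distinct a,b, and P can be taken to consist of exactly ∑ |N(a,b)| votes, the sum taken over unordered pairs {a,b} of distinct candidates. -/
/-!
If a vote `v` ranks `a` directly above `b`, let `w` be the reverse of `v` with `a` and `b`
exchanged, so that `a` is still directly above `b`. The two votes `v, w` give `a` a net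
advantage of `2` over `b` and cancel on every other pair. Taking `N(a,b)/2` copies of this
pair of votes for each ordered pair with `N(a,b) > 0` realises `N`, with
`∑ N(a,b)⁺ = ½ ∑ |N(a,b)|` votes in total.
-/

/-- A vote over a finite candidate set `C` is a linear order on `C`, encoded as the
ranking equivalence sending each candidate to its position (position `0` is the top). -/
abbrev Vote (C : Type*) [Fintype C] : Type _ := C ≃ Fin (Fintype.card C)

/-- `adv P a b` is the number of votes in the profile `P` ranking `a` above `b`. -/
def adv {C : Type*} [Fintype C] (P : List (Vote C)) (a b : C) : ℕ :=
  P.countP (fun v => decide (v a < v b))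

/-- The net advantage of `a` over `b` in the profile `P`. -/
def netadv {C : Type*} [Fintype C] (P : List (Vote C)) (a b : C) : ℤ :=
  (adv P a b : ℤ) - (adv P b a : ℤ)

section NetAdvantage

variable {C : Type*} [Fintype C]

lemma netadv_swap (P : List (Vote C)) (a b : C) : netadv P b a = -netadv P a b :=
  (neg_sub _ _).symm

lemma netadv_append (P Q : List (Vote C)) (a b : C) :
    netadv (P ++ Q) a b = netadv P a b + netadv Q a b := by
  simp only [netadv, adv, List.countP_append]
  push_cast
  ring

lemma netadv_flatten (L : List (List (Vote C))) (a b : C) :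
    netadv L.flatten a b = (L.map (netadv · a b)).sum := by
  induction L with
  | nil => simp [netadv, adv]
  | cons P L ih => simp [netadv_append, ih]

lemma netadv_flatten_replicate (k : ℕ) (P : List (Vote C)) (a b : C) :
    netadv (List.replicate k P).flatten a b = k * netadv P a b := by
  simp [netadv_flatten, List.map_replicate, List.sum_replicate]

lemma netadv_singleton (v : Vote C) {a b : C} (hab : a ≠ b) :
    netadv [v] a b = if v a < v b then 1 else -1 := by
  have hv : v a ≠ v b := v.injective.ne hab
  by_cases h : v a < v b
  · simp [netadv, adv, h, h.not_gt]
  · simp [netadv, adv, h, lt_of_le_of_ne (not_lt.mp h) hv.symm]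

lemma netadv_singleton_eq_of_lt_iff {v w : Vote C} {a b : C} (hab : a ≠ b)
    (h : w a < w b ↔ v b < v a) : netadv [w] a b = netadv [v] b a := by
  simp only [netadv_singleton w hab, netadv_singleton v hab.symm, h]

end NetAdvantage

lemma Function.Injective.swap_lt_swap_iff {C : Type*} [DecidableEq C] {f : C → ℕ}
    (hf : Function.Injective f) {a b c d : C} (hsucc : f b = f a + 1)
    (h₁ : (c, d) ≠ (a, b)) (h₂ : (c, d) ≠ (b, a)) :
    f (Equiv.swap a b c) < f (Equiv.swap a b d) ↔ f c < f d := by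
  simp only [ne_eq, Prod.mk.injEq, not_and] at h₁ h₂
  rw [Equiv.swap_apply_def, Equiv.swap_apply_def]
  split_ifs <;> simp only [← hf.eq_iff] at * <;> omega

namespace Vote

variable {C : Type*} [Fintype C]

def reverse (v : Vote C) : Vote C := v.trans Fin.revPerm

lemma reverse_lt_reverse_iff (v : Vote C) {a b : C} : v.reverse a < v.reverse b ↔ v b < v a :=
  Fin.rev_lt_rev

lemma exists_adjacent {a b : C} (hab : a ≠ b) : ∃ v : Vote C, (v b : ℕ) = v a + 1 := by
  classical
  have hcard : 1 < Fintype.card C := Fintype.one_lt_card_iff.mpr ⟨a, b, hab⟩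
  let top : Fin (Fintype.card C) := ⟨0, by omega⟩
  let second : Fin (Fintype.card C) := ⟨1, hcard⟩
  let u : Vote C := (Fintype.equivFin C).trans (Equiv.swap (Fintype.equivFin C a) top)
  have hua : u a = top := by simp [u]
  have hub : u b ≠ top := hua ▸ u.injective.ne hab.symm
  refine ⟨u.trans (Equiv.swap (u b) second), ?_⟩
  have hva : Equiv.swap (u b) second (u a) = top := by
    rw [hua, Equiv.swap_apply_of_ne_of_ne hub.symm (by simp [top, second, Fin.ext_iff])]
  simp [hva, top, second]

end Vote

section Gadget

variable {C : Type*} [Fintype C]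

lemma netadv_pair_eq_zero {v w : Vote C} {c d : C} (hcd : c ≠ d) (h : w c < w d ↔ v d < v c) :
    netadv [v, w] c d = 0 := by
  rw [← List.singleton_append, netadv_append, netadv_singleton_eq_of_lt_iff hcd h, netadv_swap,
    neg_add_cancel]

lemma netadv_pair_eq_two {v w : Vote C} {c d : C} (hv : v c < v d) (hw : w c < w d) :
    netadv [v, w] c d = 2 := by
  simp [netadv, adv, hv, hw, hv.not_gt, hw.not_gt]

lemma netadv_pair_reverse_swap [DecidableEq C] {v : Vote C} {a b : C} (hv : (v b : ℕ) = v a + 1)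
    {c d : C} (hcd : c ≠ d) :
    netadv [v, Vote.reverse ((Equiv.swap a b).trans v)] c d =
      2 * ((if (a, b) = (c, d) then 1 else 0) - if (a, b) = (d, c) then 1 else 0) := by
  have hv_lt : v a < v b := by rw [Fin.lt_def]; omega
  have hw_lt : Vote.reverse ((Equiv.swap a b).trans v) a <
      Vote.reverse ((Equiv.swap a b).trans v) b := by
    simpa [Vote.reverse_lt_reverse_iff] using hv_lt
  split_ifs with h₁ h₂ h₂ <;> simp only [Prod.mk.injEq] at h₁ h₂
  · exact absurd (h₁.1.symm.trans h₂.1) hcd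
  · rw [← h₁.1, ← h₁.2, netadv_pair_eq_two hv_lt hw_lt]
    norm_num
  · rw [← h₂.1, ← h₂.2, netadv_swap, netadv_pair_eq_two hv_lt hw_lt]
    norm_num
  · refine netadv_pair_eq_zero hcd ?_
    rw [Vote.reverse_lt_reverse_iff, Fin.lt_def, Fin.lt_def]
    exact (Fin.val_injective.comp v.injective).swap_lt_swap_iff hv (by grind) (by grind)

lemma exists_pair_netadv_eq [DecidableEq C] (a b : C) : ∃ G : List (Vote C), G.length = 2 ∧
    ∀ c d : C, c ≠ d →
      netadv G c d = 2 * ((if (a, b) = (c, d) then 1 else 0) - if (a, b) = (d, c) then 1 else 0) := by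
  by_cases hab : a = b
  · subst hab
    let v : Vote C := Fintype.equivFin C
    refine ⟨[v, v.reverse], rfl, fun c d hcd => ?_⟩
    rw [netadv_pair_eq_zero hcd v.reverse_lt_reverse_iff]
    grind
  · obtain ⟨v, hv⟩ := Vote.exists_adjacent hab
    exact ⟨_, rfl, fun c d hcd => netadv_pair_reverse_swap hv hcd⟩

end Gadget

lemma exists_profile_netadv_eq {C : Type*} [Fintype C] (M : C × C → ℕ) :
    ∃ P : List (Vote C), (∀ c d : C, c ≠ d → netadv P c d = 2 * (M (c, d) : ℤ) - 2 * M (d, c)) ∧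
      P.length = 2 * ∑ p, M p := by
  classical
  choose G hGlen hG using exists_pair_netadv_eq (C := C)
  let L := Finset.univ.toList.map fun p : C × C => (List.replicate (M p) (G p.1 p.2)).flatten
  refine ⟨L.flatten, fun c d hcd => ?_, ?_⟩
  · rw [netadv_flatten, List.map_map, Finset.sum_map_toList]
    simp only [Function.comp_def, netadv_flatten_replicate, hG _ _ c d hcd]
    simp [mul_sub, Finset.sum_sub_distrib]
    ring
  · simp [L, List.length_flatten, List.map_map, Finset.sum_map_toList, hGlen, Finset.sum_mul, mul_comm]

lemma sum_abs_eq_two_mul_sum_toNat {C : Type*} [Fintype C] {N : C × C → ℤ}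
    (hanti : ∀ a b : C, N (a, b) = -N (b, a)) :
    ∑ p, |N p| = 2 * ∑ p, ((N p).toNat : ℤ) := by
  have habs : ∀ p, |N p| = (N p).toNat + (N p.swap).toNat := fun ⟨a, b⟩ => by
    rw [Prod.swap_prod_mk, ← neg_neg (N (b, a)), ← hanti, Int.abs_eq_natAbs,
      ← Int.toNat_add_toNat_neg_eq_natAbs, Nat.cast_add]
  rw [Finset.sum_congr rfl fun p _ => habs p, Finset.sum_add_distrib,
    Fintype.sum_equiv (Equiv.prodComm C C) (fun p => ((N p.swap).toNat : ℤ))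
      (fun p => ((N p).toNat : ℤ)) fun _ => rfl,
    two_mul]

theorem mcgarvey_even_general {C : Type*} [Fintype C]
    (N : C × C → ℤ)
    (hanti : ∀ a b : C, N (a, b) = - N (b, a))
    (heven : ∀ a b : C, Even (N (a, b))) :
    ∃ P : List (Vote C),
      (∀ a b : C, a ≠ b → netadv P a b = N (a, b)) ∧
      2 * (P.length : ℤ) = ∑ a : C, ∑ b : C, |N (a, b)| := by
  obtain ⟨P, hP, hlen⟩ := exists_profile_netadv_eq fun p => (N p).toNat / 2
  have hhalf : ∀ p, 2 * (((N p).toNat / 2 : ℕ) : ℤ) = (N p).toNat := fun ⟨a, b⟩ => by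
    obtain ⟨r, hr⟩ := heven a b
    omega
  refine ⟨P, fun a b hab => ?_, ?_⟩
  · rw [hP a b hab, hhalf, hhalf]
    have := hanti a b
    omega
  · rw [← Fintype.sum_prod_type', sum_abs_eq_two_mul_sum_toNat hanti, hlen, Nat.cast_mul, Nat.cast_sum, Nat.cast_ofNat, Finset.mul_sum]
    exact congrArg (2 * ·) (Finset.sum_congr rfl fun p _ => hhalf p)

/-- **McGarvey's method, even case.** Every antisymmetric integer-valued function `N` on
pairs of candidates all of whose values are even is the net advantage function of some
profile; moreover the profile can be taken to have exactly `∑ |N(a,b)|` votes, the sum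
over unordered pairs of distinct candidates (stated here as: twice the number of votes
equals the sum of `|N(a,b)|` over all ordered pairs). -/
theorem mcgarvey_even {C : Type*} [Fintype C] [DecidableEq C]
    (hm : 2 ≤ Fintype.card C)
    (N : C × C → ℤ)
    (hanti : ∀ a b : C, N (a, b) = - N (b, a))
    (heven : ∀ a b : C, Even (N (a, b))) :
    ∃ P : List (Vote C),
      (∀ a b : C, a ≠ b → netadv P a b = N (a, b)) ∧
      2 * (P.length : ℤ) = ∑ a : C, ∑ b : C, |N (a, b)| :=
  mcgarvey_even_general N hanti heven
end

section
/- Consider a Borda election with candidate set C = {c*} ∪ {c_1,…,c_m} of m+1 candidates, a profile V_NM of nonmanipulative votes giving each candidate x Borda score score(x), and t manipulative votes to be added, with gaps g_i = score(c*) + t·m − score(c_i). Suppose the instance is tight, i.e., ∑_{i=1}^m g_i = t·m(m−1)/2. If t added votes make the final Borda score of c* at least that of every c_i, then every one of the t manipulative votes ranks c* first, and each candidate c_i receives exactly g_i Borda points in total from the t manipulative votes. -/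
/-- Borda points awarded by the vote `v` to candidate `x`. -/
def bordaPts {C : Type*} [Fintype C] (v : Vote C) (x : C) : ℕ :=
  (Fintype.card C - 1) - (v x : ℕ)

/-- The Borda score of candidate `x` in the profile `P`. -/
def bordaScore {C : Type*} [Fintype C] (P : List (Vote C)) (x : C) : ℕ :=
  (P.map (fun v => bordaPts v x)).sum

/-!
Let `d = t·m - score_W(c*)` be the number of points `c*` misses in the manipulative votes
(`d ≥ 0`). Winning forces `score_W(x) ≤ g(x) - d ≤ g(x)` for every `x ≠ c*`, while the
manipulative votes hand out `t·m(m+1)/2` points in total, so tightness gives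
`∑_{x ≠ c*} score_W(x) = ∑_{x ≠ c*} g(x) + d`. Hence `d = 0`, which means every vote ranks `c*`
first, and the inequalities `score_W(x) ≤ g(x)` with equal sums are all equalities.
-/

open Finset

theorem Finset.eq_zero_and_forall_eq_of_le_sub_of_sum_eq_add {ι α : Type*} [AddCommGroup α]
    [PartialOrder α] [IsOrderedAddMonoid α] {s : Finset ι} {f g : ι → α} {d : α} (hd : 0 ≤ d)
    (hle : ∀ x ∈ s, f x ≤ g x - d) (hsum : ∑ x ∈ s, f x = ∑ x ∈ s, g x + d) :
    d = 0 ∧ ∀ x ∈ s, f x = g x := by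
  have hfg : ∀ x ∈ s, f x ≤ g x := fun x hx => (hle x hx).trans (sub_le_self _ hd)
  have hd0 : d = 0 := by
    have h := sum_le_sum hfg
    rw [hsum, add_le_iff_nonpos_right] at h
    exact le_antisymm h hd
  refine ⟨hd0, (sum_eq_sum_iff_of_le hfg).mp ?_⟩
  rw [hsum, hd0, add_zero]

theorem Finset.sum_range_id_eq_sum_range_pred_add (n : ℕ) :
    ∑ k ∈ range n, k = ∑ k ∈ range (n - 1), k + (n - 1) := by
  cases n with
  | zero => rfl
  | succ n => exact sum_range_succ _ n

section Borda

variable {C : Type*} [Fintype C]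

theorem bordaPts_le (v : Vote C) (x : C) : bordaPts v x ≤ Fintype.card C - 1 :=
  Nat.sub_le _ _

theorem bordaPts_eq_card_sub_one_iff (v : Vote C) (x : C) :
    bordaPts v x = Fintype.card C - 1 ↔ (v x : ℕ) = 0 := by
  have := (v x).isLt
  unfold bordaPts
  omega

theorem sum_bordaPts (v : Vote C) : ∑ x, bordaPts v x = ∑ k ∈ range (Fintype.card C), k := by
  rw [← sum_range_reflect, ← Fin.sum_univ_eq_sum_range (fun k => Fintype.card C - 1 - k)]
  exact Fintype.sum_equiv v _ _ fun _ => rfl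

@[simp]
theorem bordaScore_nil (x : C) : bordaScore [] x = 0 := rfl

@[simp]
theorem bordaScore_cons (v : Vote C) (W : List (Vote C)) (x : C) :
    bordaScore (v :: W) x = bordaPts v x + bordaScore W x := rfl

theorem bordaScore_append (P Q : List (Vote C)) (x : C) :
    bordaScore (P ++ Q) x = bordaScore P x + bordaScore Q x := by
  simp [bordaScore]

theorem bordaScore_le (W : List (Vote C)) (x : C) :
    bordaScore W x ≤ W.length * (Fintype.card C - 1) := by
  induction W with
  | nil => simp
  | cons v W ih =>
    rw [bordaScore_cons, List.length_cons, Nat.succ_mul]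
    have := bordaPts_le v x
    omega

theorem forall_mem_eq_zero_of_bordaScore_eq {W : List (Vote C)} {x : C}
    (h : bordaScore W x = W.length * (Fintype.card C - 1)) : ∀ v ∈ W, (v x : ℕ) = 0 := by
  induction W with
  | nil => simp
  | cons v W ih =>
    rw [bordaScore_cons, List.length_cons, Nat.succ_mul] at h
    have hv := bordaPts_le v x
    have hW := bordaScore_le W x
    intro w hw
    rcases List.mem_cons.mp hw with rfl | hw
    · exact (bordaPts_eq_card_sub_one_iff w x).mp (by omega)
    · exact ih (by omega) w hw

theorem sum_bordaScore (W : List (Vote C)) :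
    ∑ x, bordaScore W x = W.length * ∑ k ∈ range (Fintype.card C), k := by
  induction W with
  | nil => simp
  | cons v W ih =>
    simp only [bordaScore_cons, sum_add_distrib, ih, sum_bordaPts, List.length_cons]
    ring

theorem sum_erase_bordaScore_add [DecidableEq C] (W : List (Vote C)) (c : C) :
    ∑ x ∈ univ.erase c, bordaScore W x + bordaScore W c =
      W.length * ((Fintype.card C - 1) * (Fintype.card C - 2) / 2) +
        W.length * (Fintype.card C - 1) := by
  rw [sum_erase_add _ _ (mem_univ c), sum_bordaScore, sum_range_id_eq_sum_range_pred_add,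
    sum_range_id, Nat.sub_sub, mul_add]

end Borda

theorem borda_tight_manipulation_general {C : Type*} [Fintype C] [DecidableEq C]
    (cstar : C) (VNM W : List (Vote C)) (t : ℕ) (hW : W.length = t)
    (gap : C → ℤ)
    (hgap : ∀ x : C, gap x =
      (bordaScore VNM cstar : ℤ) + (t : ℤ) * ((Fintype.card C : ℤ) - 1)
        - (bordaScore VNM x : ℤ))
    (htight : ∑ x ∈ Finset.univ.erase cstar, gap x =
      ((t * ((Fintype.card C - 1) * (Fintype.card C - 2) / 2) : ℕ) : ℤ))
    (hwin : ∀ x : C, x ≠ cstar →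
      bordaScore (VNM ++ W) x ≤ bordaScore (VNM ++ W) cstar) :
    (∀ v ∈ W, (v cstar : ℕ) = 0) ∧
    (∀ x : C, x ≠ cstar → (bordaScore W x : ℤ) = gap x) := by
  have hn : 1 ≤ Fintype.card C := Fintype.card_pos_iff.mpr ⟨cstar⟩
  subst hW
  set d : ℤ := W.length * ((Fintype.card C : ℤ) - 1) - bordaScore W cstar
  have hd : 0 ≤ d := by
    have := bordaScore_le W cstar
    zify [hn] at this
    omega
  have hle : ∀ x ∈ univ.erase cstar, (bordaScore W x : ℤ) ≤ gap x - d := by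
    intro x hx
    have := hwin x (ne_of_mem_erase hx)
    rw [bordaScore_append, bordaScore_append] at this
    rw [hgap x]
    omega
  have hsum : ∑ x ∈ univ.erase cstar, (bordaScore W x : ℤ) =
      ∑ x ∈ univ.erase cstar, gap x + d := by
    have := sum_erase_bordaScore_add W cstar
    rw [htight]
    generalize (Fintype.card C - 1) * (Fintype.card C - 2) / 2 = k at this
    zify [hn] at this
    push_cast
    omega
  obtain ⟨hd0, heq⟩ := eq_zero_and_forall_eq_of_le_sub_of_sum_eq_add hd hle hsum
  refine ⟨forall_mem_eq_zero_of_bordaScore_eq ?_, fun x hx => heq x (mem_erase.2 ⟨hx, mem_univ x⟩)⟩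
  zify [hn]
  omega

/-- Tight Borda manipulation instances: with candidates `{c*} ∪ {c_1, …, c_m}`
(`m = |C| - 1`), nonmanipulative profile `VNM`, `t` manipulative votes `W`, and gaps
`g(x) = score(c*) + t·m - score(x)`, suppose the instance is tight, i.e.
`∑_{x ≠ c*} g(x) = t·m(m-1)/2`. If adding `W` makes the final Borda score of `c*` at
least that of every other candidate, then every manipulative vote ranks `c*` first and
every candidate `x ≠ c*` receives exactly `g(x)` Borda points from the votes of `W`. -/
theorem borda_tight_manipulation {C : Type*} [Fintype C] [DecidableEq C]
    (hm : 2 ≤ Fintype.card C)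
    (cstar : C) (VNM W : List (Vote C)) (t : ℕ) (hW : W.length = t)
    (gap : C → ℤ)
    (hgap : ∀ x : C, gap x =
      (bordaScore VNM cstar : ℤ) + (t : ℤ) * ((Fintype.card C : ℤ) - 1)
        - (bordaScore VNM x : ℤ))
    (htight : ∑ x ∈ Finset.univ.erase cstar, gap x =
      ((t * ((Fintype.card C - 1) * (Fintype.card C - 2) / 2) : ℕ) : ℤ))
    (hwin : ∀ x : C, x ≠ cstar →
      bordaScore (VNM ++ W) x ≤ bordaScore (VNM ++ W) cstar) :
    (∀ v ∈ W, (v cstar : ℕ) = 0) ∧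
    (∀ x : C, x ≠ cstar → (bordaScore W x : ℤ) = gap x) :=
  borda_tight_manipulation_general cstar VNM W t hW gap hgap htight hwin
end
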